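/- Let P be a finite p-group with a normal subgroup N of index p. Then |P : P'| = p² if and only if for every x ∈ P \ N, the fixed-point subgroup C_{N/N'}(x) of the conjugation action of x on N/N' has order p. (Equivalently, this fixed-point subgroup has order p for one x ∈ P \ N if and only if it does for every such x.) -/

import Mathlib

open scoped commutatorElement

/-- The set of cosets `nN'` in `N/N'` fixed by conjugation by `x`,
i.e. `{nN' : n ∈ N, [n,x] ∈ N'}`. -/
def fixedCosets {P : Type*} [Group P] (N : Subgroup P) (x : P) :
    Set (↥N ⧸ (⁅N, N⁆.subgroupOf N)) :=
  {q | ∃ n : N, QuotientGroup.mk n = q ∧ ⁅(n : P), x⁆ ∈ ⁅N, N⁆}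

section Aux

variable {G : Type*} [Group G]

lemma sup_zpowers_eq_top' {A : Subgroup G} {p : ℕ} (hp : p.Prime)
    (hA : A.index = p) {x : G} (hx : x ∉ A) : A ⊔ Subgroup.zpowers x = ⊤ := by
  have h1 : (A ⊔ Subgroup.zpowers x).index ∣ p :=
    hA ▸ Subgroup.index_dvd_of_le le_sup_left
  rcases hp.eq_one_or_self_of_dvd _ h1 with h | h
  · exact Subgroup.index_eq_one.mp h
  · exfalso
    have h2 := Subgroup.relIndex_mul_index (le_sup_left : A ≤ A ⊔ Subgroup.zpowers x)
    rw [h, hA] at h2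
    have h3 : A.relIndex (A ⊔ Subgroup.zpowers x) = 1 :=
      Nat.eq_of_mul_eq_mul_right hp.pos (by rw [h2, one_mul])
    have h4 : A ⊔ Subgroup.zpowers x ≤ A := Subgroup.relIndex_eq_one.mp h3
    exact hx (h4 ((le_sup_right : Subgroup.zpowers x ≤ A ⊔ Subgroup.zpowers x)
      (Subgroup.mem_zpowers x)))

lemma comm_mem_of_mem {A : Subgroup G} [A.Normal] {a : G} (ha : a ∈ A) (x : G) :
    ⁅a, x⁆ ∈ A := by
  have h : a * (x * a⁻¹ * x⁻¹) ∈ A :=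
    A.mul_mem ha (‹A.Normal›.conj_mem _ (A.inv_mem ha) x)
  convert h using 1
  group

/-- The commutator-with-`x` homomorphism on an abelian normal subgroup. -/
def commHom (A : Subgroup G) [A.Normal] (hA : ∀ a b : A, Commute (a : G) (b : G))
    (x : G) : ↥A →* G :=
  MonoidHom.mk' (fun a => ⁅(a : G), x⁆) (by
    intro a b
    show ⁅((a * b : A) : G), x⁆ = ⁅(a : G), x⁆ * ⁅(b : G), x⁆
    have h1 : ⁅((a * b : A) : G), x⁆ = (a : G) * ⁅(b : G), x⁆ * (a : G)⁻¹ * ⁅(a : G), x⁆ := by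
      push_cast
      group
    have hcb : Commute (a : G) ⁅(b : G), x⁆ := hA a ⟨_, comm_mem_of_mem b.2 x⟩
    have hcc : Commute ⁅(a : G), x⁆ ⁅(b : G), x⁆ :=
      hA ⟨_, comm_mem_of_mem a.2 x⟩ ⟨_, comm_mem_of_mem b.2 x⟩
    rw [h1, hcb.eq, mul_assoc, mul_assoc, mul_inv_cancel_left, hcc.eq])

@[simp] lemma commHom_apply (A : Subgroup G) [A.Normal]
    (hA : ∀ a b : A, Commute (a : G) (b : G)) (x : G) (a : A) :
    commHom A hA x a = ⁅(a : G), x⁆ := rfl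

lemma range_le (A : Subgroup G) [A.Normal] (hA : ∀ a b : A, Commute (a : G) (b : G))
    (x : G) : (commHom A hA x).range ≤ A := by
  rintro y ⟨a, rfl⟩
  exact comm_mem_of_mem a.2 x

lemma range_normal {A : Subgroup G} [A.Normal]
    (hA : ∀ a b : A, Commute (a : G) (b : G)) {p : ℕ} (hp : p.Prime)
    (hAi : A.index = p) {x : G} (hx : x ∉ A) : ((commHom A hA x).range).Normal := by
  set D := (commHom A hA x).range with hDdef
  have hDA : D ≤ A := range_le A hA x
  have hxn : ∀ d ∈ D, x * d * x⁻¹ ∈ D := by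
    rintro _ ⟨a, rfl⟩
    refine ⟨⟨x * a * x⁻¹, ‹A.Normal›.conj_mem _ a.2 x⟩, ?_⟩
    show ⁅x * (a : G) * x⁻¹, x⁆ = x * ⁅(a : G), x⁆ * x⁻¹
    group
  have hxin : ∀ d ∈ D, x⁻¹ * d * x ∈ D := by
    rintro _ ⟨a, rfl⟩
    refine ⟨⟨x⁻¹ * a * x, by simpa using ‹A.Normal›.conj_mem _ a.2 x⁻¹⟩, ?_⟩
    show ⁅x⁻¹ * (a : G) * x, x⁆ = x⁻¹ * ⁅(a : G), x⁆ * x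
    group
  have hxmem : x ∈ Subgroup.normalizer (D : Set G) := by
    rw [Subgroup.mem_normalizer_iff]
    intro h
    constructor
    · intro hh; exact hxn h hh
    · intro hh
      have := hxin _ hh
      simpa [mul_assoc] using this
  have hAmem : A ≤ Subgroup.normalizer (D : Set G) := by
    intro a ha
    rw [Subgroup.mem_normalizer_iff]
    intro h
    have iff1 : ∀ d ∈ D, a * d * a⁻¹ = d := by
      intro d hd
      have : Commute a d := hA ⟨a, ha⟩ ⟨d, hDA hd⟩
      rw [this.eq, mul_inv_cancel_right]
    constructor
    · intro hh; rw [iff1 h hh]; exact hh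
    · intro hh
      have h2 : a⁻¹ * (a * h * a⁻¹) * a = h := by group
      have : a⁻¹ * (a * h * a⁻¹) * (a⁻¹)⁻¹ ∈ D := by
        have iff2 : ∀ d ∈ D, a⁻¹ * d * a⁻¹⁻¹ = d := by
          intro d hd
          have : Commute a⁻¹ d := (hA ⟨a, ha⟩ ⟨d, hDA hd⟩).inv_left
          rw [this.eq, mul_inv_cancel_right]
        rw [iff2 _ hh]; exact hh
      simpa [h2] using (by simpa using this : a⁻¹ * (a * h * a⁻¹) * a ∈ D)
  have htop : Subgroup.normalizer (D : Set G) = ⊤ := by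
    rw [eq_top_iff, ← sup_zpowers_eq_top' hp hAi hx]
    exact sup_le hAmem (Subgroup.zpowers_le.mpr hxmem)
  exact Subgroup.normalizer_eq_top_iff.mp htop

lemma commutator_eq_range {A : Subgroup G} [A.Normal]
    (hA : ∀ a b : A, Commute (a : G) (b : G)) {p : ℕ} (hp : p.Prime)
    (hAi : A.index = p) {x : G} (hx : x ∉ A) :
    commutator G = (commHom A hA x).range := by
  set D := (commHom A hA x).range with hDdef
  haveI hDn : D.Normal := range_normal hA hp hAi hx
  apply le_antisymm
  · -- commutator ≤ D
    rw [commutator_def, Subgroup.commutator_le]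
    intro g _ h _
    set ρ := QuotientGroup.mk' D with hρ
    have hmem_iff : ∀ y : G, y ∈ D ↔ ρ y = 1 := fun y =>
      (QuotientGroup.eq_one_iff y).symm
    have cAx : ∀ a : A, Commute (ρ a) (ρ x) := by
      intro a
      have : ⁅(a : G), x⁆ ∈ D := ⟨a, rfl⟩
      rw [hmem_iff, map_commutatorElement] at this
      exact commutatorElement_eq_one_iff_commute.mp this
    have cAA : ∀ a b : A, Commute (ρ a) (ρ b) := fun a b => (hA a b).map ρ
    have hdecomp : ∀ g : G, ∃ (a : A) (k : ℤ), g = (a : G) * x ^ k := by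
      intro g
      have hg : g ∈ A ⊔ Subgroup.zpowers x := by
        rw [sup_zpowers_eq_top' hp hAi hx]; trivial
      rw [← SetLike.mem_coe, Subgroup.normal_mul] at hg
      obtain ⟨a, ha, z, hz, rfl⟩ := hg
      obtain ⟨k, rfl⟩ := Subgroup.mem_zpowers_iff.mp hz
      exact ⟨⟨a, ha⟩, k, rfl⟩
    obtain ⟨a, k, rfl⟩ := hdecomp g
    obtain ⟨b, l, rfl⟩ := hdecomp h
    rw [hmem_iff, map_commutatorElement]
    apply commutatorElement_eq_one_iff_commute.mpr
    rw [map_mul, map_mul, map_zpow, map_zpow]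
    have h1 : Commute (ρ a) (ρ b * ρ x ^ l) := (cAA a b).mul_right ((cAx a).zpow_right l)
    have h2 : Commute (ρ x ^ k) (ρ b * ρ x ^ l) :=
      (((cAx b).symm.zpow_left k).mul_right ((Commute.refl (ρ x)).zpow_zpow k l))
    exact h1.mul_left h2
  · rintro _ ⟨a, rfl⟩
    exact Subgroup.commutator_mem_commutator (Subgroup.mem_top _) (Subgroup.mem_top _)

lemma index_commutator_eq_aux [Finite G] {A : Subgroup G} [A.Normal]
    (hA : ∀ a b : A, Commute (a : G) (b : G)) {p : ℕ} (hp : p.Prime)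
    (hAi : A.index = p) {x : G} (hx : x ∉ A) :
    (commutator G).index = p * Nat.card (commHom A hA x).ker := by
  set φ := commHom A hA x with hφ
  have hDA : φ.range ≤ A := range_le A hA x
  have h1 : (φ.range).relIndex A * A.index = (φ.range).index :=
    Subgroup.relIndex_mul_index hDA
  have hcardA : Nat.card A = Nat.card (↥A ⧸ φ.ker) * Nat.card φ.ker :=
    Subgroup.card_eq_card_quotient_mul_card_subgroup _
  have he : Nat.card (↥A ⧸ φ.ker) = Nat.card φ.range :=
    Nat.card_congr (QuotientGroup.quotientKerEquivRange φ).toEquiv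
  have hsub : Nat.card ((φ.range).subgroupOf A) = Nat.card φ.range :=
    Nat.card_congr (Subgroup.subgroupOfEquivOfLe hDA).toEquiv
  have h2 : Nat.card ((φ.range).subgroupOf A) * ((φ.range).subgroupOf A).index
      = Nat.card A := Subgroup.card_mul_index _
  have hrel : (φ.range).relIndex A = ((φ.range).subgroupOf A).index := rfl
  have hpos : 0 < Nat.card φ.range := Nat.card_pos
  have h3 : Nat.card φ.range * (φ.range).relIndex A
      = Nat.card φ.range * Nat.card φ.ker := by
    rw [hrel, ← hsub, h2, hcardA, he, hsub]
  have h4 : (φ.range).relIndex A = Nat.card φ.ker :=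
    Nat.eq_of_mul_eq_mul_left hpos h3
  rw [commutator_eq_range hA hp hAi hx, ← h1, h4, hAi, mul_comm]

lemma key_index {P : Type*} [Group P] [Finite P] {p : ℕ} (hp : p.Prime)
    (N : Subgroup P) [N.Normal] (hN : N.index = p) {x : P} (hx : x ∉ N) :
    (commutator P).index = p * Nat.card (fixedCosets N x) := by
  set K := ⁅N, N⁆ with hK
  haveI hKn : K.Normal := Subgroup.commutator_normal N N
  set π := QuotientGroup.mk' K with hπ
  have hπs : Function.Surjective π := QuotientGroup.mk'_surjective K
  have hKN : K ≤ N := Subgroup.commutator_le_left N N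
  have hkerπ : π.ker = K := QuotientGroup.ker_mk' K
  set A := N.map π with hA
  haveI hAn : A.Normal := Subgroup.Normal.map ‹N.Normal› π hπs
  have hmemA : ∀ g : P, π g ∈ A ↔ g ∈ N := by
    intro g
    constructor
    · rintro ⟨n, hn, heq⟩
      obtain ⟨z, hz, hzz⟩ := (QuotientGroup.mk'_eq_mk' K).mp heq
      exact hzz ▸ N.mul_mem hn (hKN hz)
    · intro hg; exact ⟨g, hg, rfl⟩
  have hxA : π x ∉ A := fun h => hx ((hmemA x).mp h)
  have hcomm : ∀ a b : A, Commute (a : P ⧸ K) (b : P ⧸ K) := by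
    rintro ⟨_, n, hn, rfl⟩ ⟨_, m, hm, rfl⟩
    apply commutatorElement_eq_one_iff_commute.mp
    rw [← map_commutatorElement]
    exact (QuotientGroup.eq_one_iff _).mpr (Subgroup.commutator_mem_commutator hn hm)
  have hAi : A.index = p := by
    rw [hA, Subgroup.index_map_eq (H := N) hπs (le_of_eq_of_le hkerπ hKN)]; exact hN
  set φ := commHom A hcomm (π x) with hφ
  have hmain : (commutator (P ⧸ K)).index = p * Nat.card φ.ker :=
    index_commutator_eq_aux hcomm hp hAi hxA
  have hcommP : (commutator P).index = (commutator (P ⧸ K)).index := by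
    have h1 : (commutator P).map π = commutator (P ⧸ K) := by
      rw [commutator_def, commutator_def, Subgroup.map_commutator,
        Subgroup.map_top_of_surjective π hπs]
    rw [← h1, Subgroup.index_map_eq (H := commutator P) hπs
      (le_of_eq_of_le hkerπ (by rw [commutator_def]; exact Subgroup.commutator_mono le_top le_top))]
  -- the isomorphism N ⧸ N' ≃* A
  set f : ↥N →* P ⧸ K := π.comp N.subtype with hf
  have hkerf : f.ker = K.subgroupOf N := by
    ext n
    rw [MonoidHom.mem_ker, Subgroup.mem_subgroupOf]
    exact QuotientGroup.eq_one_iff _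
  have hrangef : f.range = A := by
    rw [hf, MonoidHom.range_comp, Subgroup.range_subtype]
  haveI : (K.subgroupOf N).Normal := hkerf ▸ f.normal_ker
  set e : (↥N ⧸ K.subgroupOf N) ≃* ↥A :=
    ((QuotientGroup.quotientMulEquivOfEq hkerf.symm).trans
      (QuotientGroup.quotientKerEquivRange f)).trans
      (MulEquiv.subgroupCongr hrangef) with he
  have hecoe : ∀ n : ↥N, ((e (QuotientGroup.mk n)) : P ⧸ K) = π ↑n := fun n => rfl
  have hiff : ∀ q, q ∈ fixedCosets N x ↔ e q ∈ φ.ker := by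
    intro q
    constructor
    · rintro ⟨n, rfl, hc⟩
      rw [MonoidHom.mem_ker]
      show ⁅((e (QuotientGroup.mk n)) : P ⧸ K), π x⁆ = 1
      rw [hecoe, ← map_commutatorElement]
      exact (QuotientGroup.eq_one_iff _).mpr hc
    · intro hq
      obtain ⟨n, rfl⟩ := QuotientGroup.mk_surjective q
      rw [MonoidHom.mem_ker] at hq
      refine ⟨n, rfl, ?_⟩
      have : ⁅((e (QuotientGroup.mk n)) : P ⧸ K), π x⁆ = 1 := hq
      rw [hecoe, ← map_commutatorElement] at this
      exact (QuotientGroup.eq_one_iff _).mp this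
  have hcards : Nat.card (fixedCosets N x) = Nat.card φ.ker :=
    Nat.card_congr (e.toEquiv.subtypeEquiv hiff)
  rw [hcommP, hmain, hcards]

end Aux

/-- Let `P` be a finite `p`-group with a normal subgroup `N` of index `p`. Then
`|P : P'| = p ^ 2` iff for every `x ∈ P \ N` the fixed points of `x` on `N/N'` number
exactly `p`; moreover this holds for one `x ∈ P \ N` iff it holds for every such `x`. -/
theorem index_commutator_eq_sq_iff_fixedCosets_card
    {P : Type*} [Group P] [Fintype P] (p : ℕ) [Fact p.Prime] (hP : IsPGroup p P)
    (N : Subgroup P) [N.Normal] (hN : N.index = p) :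
    ((commutator P).index = p ^ 2 ↔
        ∀ x : P, x ∉ N → Nat.card (fixedCosets N x) = p) ∧
      ((∃ x : P, x ∉ N ∧ Nat.card (fixedCosets N x) = p) ↔
        ∀ x : P, x ∉ N → Nat.card (fixedCosets N x) = p) := by
  have hp : p.Prime := Fact.out
  have hkey : ∀ x : P, x ∉ N → (commutator P).index = p * Nat.card (fixedCosets N x) :=
    fun x hx => key_index hp N hN hx
  have hex : ∃ x : P, x ∉ N := by
    by_contra h
    push_neg at h
    have hTop : N = ⊤ := (Subgroup.eq_top_iff' N).mpr h
    rw [hTop, Subgroup.index_top] at hN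
    exact hp.one_lt.ne' hN.symm
  obtain ⟨x₀, hx₀⟩ := hex
  constructor
  · constructor
    · intro h y hy
      have hy' := hkey y hy
      rw [h, pow_two] at hy'
      exact (Nat.eq_of_mul_eq_mul_left hp.pos hy'.symm)
    · intro h
      rw [hkey x₀ hx₀, h x₀ hx₀, pow_two]
  · constructor
    · rintro ⟨x, hx, hc⟩ y hy
      have h1 := hkey x hx
      have h2 := hkey y hy
      rw [hc] at h1
      rw [h1] at h2
      exact (Nat.eq_of_mul_eq_mul_left hp.pos h2.symm)
    · intro h
      exact ⟨x₀, hx₀, h x₀ hx₀⟩
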